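/- Let d ≥ 2 and let X be a uniform d-dimensional simplicial complex on a countable vertex set whose (d−1)-cells have degrees bounded by some K < ∞. If 0 does not belong to the spectrum of the upper Laplacian Δ⁺ acting on Ω_{L²}^{d−1}(X), then for every oriented (d−1)-cell σ there exists a d-form f ∈ Ω_{L²}^d(X) with ∂_d f = 1_σ. -/

import Mathlib

open scoped BigOperators Classical
open Filter Topology

noncomputable section

/-- A simplicial complex on a vertex set `V`: a family of finite subsets of `V`
(the cells) closed under taking nonempty subsets. -/
structure SComplex (V : Type*) where
  cells : Set (Finset V)
  down_closed : ∀ ⦃s t : Finset V⦄, s ∈ cells → t ⊆ s → t.Nonempty → t ∈ cells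

namespace SComplex

variable {V : Type*} (X : SComplex V)

/-- The tuple `σ` of `n` vertices spans an `(n-1)`-dimensional cell of `X`. -/
def IsCellT {n : ℕ} (σ : Fin n → V) : Prop :=
  Function.Injective σ ∧ Finset.image σ Finset.univ ∈ X.cells

/-- The degree of a cell `s`: the number of cells with one more vertex containing it. -/
def degS (s : Finset V) : ℕ :=
  Set.ncard {t : Finset V | t ∈ X.cells ∧ t.card = s.card + 1 ∧ s ⊆ t}

/-- Degree of the cell spanned by a tuple. -/
def degT {n : ℕ} (σ : Fin n → V) : ℕ :=
  X.degS (Finset.image σ Finset.univ)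

/-- An `(n-1)`-form: an alternating function on oriented `(n-1)`-cells, encoded as a
function on `n`-tuples of vertices which vanishes off the cells of `X` and is
antisymmetric under permutations. -/
def IsForm (n : ℕ) (f : (Fin n → V) → ℝ) : Prop :=
  (∀ σ, ¬ X.IsCellT σ → f σ = 0) ∧
  ∀ (σ : Fin n → V) (π : Equiv.Perm (Fin n)),
    f (σ ∘ π) = ((Equiv.Perm.sign π : ℤ) : ℝ) * f σ

/-- The Dirac form `𝟙_{σ₀}`: 1 at `σ₀`, -1 at the reversed orientation, 0 elsewhere. -/
def dirac {n : ℕ} (σ₀ : Fin n → V) : (Fin n → V) → ℝ := fun σ =>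
  if ∃ π : Equiv.Perm (Fin n), Equiv.Perm.sign π = 1 ∧ σ = σ₀ ∘ π then 1
  else if ∃ π : Equiv.Perm (Fin n), Equiv.Perm.sign π = -1 ∧ σ = σ₀ ∘ π then -1
  else 0

/-- The boundary operator: `(∂f)(σ) = Σ_{v : vσ ∈ X} f(vσ)`. -/
def bdry {n : ℕ} (f : (Fin (n + 1) → V) → ℝ) : (Fin n → V) → ℝ := fun σ =>
  ∑ᶠ v ∈ {v : V | X.IsCellT (Fin.cons v σ)}, f (Fin.cons v σ)

/-- The weighted sum of `f` over the neighbours of `σ`: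
`Σ_{σ' ∼ σ} f(σ')/deg σ' = Σ_{v ◁ σ} Σ_i (-1)^i f(v(σ∖σ_i))/deg(v(σ∖σ_i))`. -/
def nbrW {n : ℕ} (f : (Fin (n + 1) → V) → ℝ) : (Fin (n + 1) → V) → ℝ := fun σ =>
  ∑ᶠ v ∈ {v : V | X.IsCellT (Fin.cons v σ)},
    ∑ i : Fin (n + 1),
      (-1 : ℝ) ^ (i : ℕ) * f (Fin.cons v (σ ∘ i.succAbove)) /
        (X.degT (Fin.cons v (σ ∘ i.succAbove)) : ℝ)

/-- The unweighted sum of `f` over the neighbours of `σ`: `Σ_{σ' ∼ σ} f(σ')`. -/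
def nbrU {n : ℕ} (f : (Fin (n + 1) → V) → ℝ) : (Fin (n + 1) → V) → ℝ := fun σ =>
  ∑ᶠ v ∈ {v : V | X.IsCellT (Fin.cons v σ)},
    ∑ i : Fin (n + 1), (-1 : ℝ) ^ (i : ℕ) * f (Fin.cons v (σ ∘ i.succAbove))

/-- The upper Laplacian `(Δ⁺f)(σ) = f(σ) - Σ_{σ'∼σ} f(σ')/deg σ'`. -/
def lapUp {n : ℕ} (f : (Fin (n + 1) → V) → ℝ) : (Fin (n + 1) → V) → ℝ := fun σ =>
  f σ - X.nbrW f σ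

/-- The transition operator of the `p`-lazy walk:
`(Af)(σ) = p f(σ) + ((1-p)/d) Σ_{σ'∼σ} f(σ')/deg σ'`, where `d = n+1`. -/
def transOp {n : ℕ} (p : ℝ) (f : (Fin (n + 1) → V) → ℝ) : (Fin (n + 1) → V) → ℝ := fun σ =>
  p * f σ + ((1 - p) / ((n : ℝ) + 1)) * X.nbrW f σ

/-- The normalized expectation process `Ẽ_nn = (d/(p(d-1)+1))^nn • A^nn 𝟙_{σ₀}`. -/
def nexp {n : ℕ} (p : ℝ) (σ₀ : Fin (n + 1) → V) (nn : ℕ) : (Fin (n + 1) → V) → ℝ :=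
  (((n : ℝ) + 1) / (p * (n : ℝ) + 1)) ^ nn • (X.transOp p)^[nn] (SComplex.dirac σ₀)

/-- The weighted inner product `⟨f,g⟩ = Σ_{σ ∈ X^{n-1}} f(σ)g(σ)/deg σ`
(each unoriented cell is represented by `n!` tuples). -/
def innerW [Fintype V] {n : ℕ} (f g : (Fin n → V) → ℝ) : ℝ :=
  (1 / (n.factorial : ℝ)) * ∑ σ : Fin n → V, f σ * g σ / (X.degT σ : ℝ)

/-- The unweighted inner product `⟨f,g⟩ = Σ_{σ ∈ X^{n-1}} f(σ)g(σ)`. -/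
def innerU [Fintype V] {n : ℕ} (f g : (Fin n → V) → ℝ) : ℝ :=
  (1 / (n.factorial : ℝ)) * ∑ σ : Fin n → V, f σ * g σ

/-- The norm induced by the weighted inner product. -/
def normW [Fintype V] {n : ℕ} (f : (Fin n → V) → ℝ) : ℝ :=
  Real.sqrt (X.innerW f f)

/-- `f` is a closed `(d-1)`-form (`f ∈ Z^{d-1} = ker ∂_d^*`), characterized by
orthogonality to the image of `∂_d`. -/
def IsClosedForm [Fintype V] (m : ℕ) (f : (Fin (m + 2) → V) → ℝ) : Prop :=
  X.IsForm (m + 2) f ∧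
  ∀ g : (Fin (m + 3) → V) → ℝ, X.IsForm (m + 3) g → X.innerW f (X.bdry g) = 0

/-- `f` is an exact `(d-1)`-form (`f ∈ B^{d-1} = im ∂_{d-1}^*`): `f = ∂_{d-1}^* g` for a
`(d-2)`-form `g`, characterized by the adjoint identity. -/
def IsExactForm [Fintype V] (m : ℕ) (f : (Fin (m + 2) → V) → ℝ) : Prop :=
  X.IsForm (m + 2) f ∧
  ∃ g : (Fin (m + 1) → V) → ℝ, X.IsForm (m + 1) g ∧
    ∀ h : (Fin (m + 2) → V) → ℝ, X.IsForm (m + 2) h →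
      X.innerW f h = innerU g (X.bdry h)

/-- Two tuples span the same oriented cell. -/
def SameOr {n : ℕ} (σ σ' : Fin n → V) : Prop :=
  ∃ π : Equiv.Perm (Fin n), Equiv.Perm.sign π = 1 ∧ σ' = σ ∘ π

/-- The neighbour relation on oriented `(d-1)`-cells: `σ ∼ σ'` iff there is an oriented
`d`-cell of which both `σ` and the reversal of `σ'` are faces with the induced
orientation; equivalently `σ' = (-1)^i v(σ∖σ_i)` for some `v ◁ σ`. -/
def Nbr {n : ℕ} (σ σ' : Fin (n + 1) → V) : Prop :=
  ∃ (v : V) (i : Fin (n + 1)), X.IsCellT (Fin.cons v σ) ∧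
    (if Even (i : ℕ) then SameOr σ' (Fin.cons v (σ ∘ i.succAbove))
     else SameOr σ' (Fin.cons v (σ ∘ i.succAbove) ∘ Equiv.swap 0 1))

/-- `σ` is a face of the oriented cell `τ` with the orientation induced by `τ`. -/
def IsInducedFace {n : ℕ} (σ : Fin (n + 1) → V) (τ : Fin (n + 2) → V) : Prop :=
  ∃ i : Fin (n + 2), if Even (i : ℕ) then SameOr σ (τ ∘ i.succAbove)
    else SameOr σ (τ ∘ i.succAbove ∘ Equiv.swap 0 1)

/-- The family `𝒯` of `d`-cells (`d = m+2`) admits a disorientation: a choice of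
orientation for each cell of `𝒯` such that any two of them sharing a
codimension-one face induce the same orientation on it. -/
def HasDisorientation (m : ℕ) (𝒯 : Set (Finset V)) : Prop :=
  ∃ c : Finset V → (Fin (m + 3) → V),
    (∀ t ∈ 𝒯, Function.Injective (c t) ∧ Finset.image (c t) Finset.univ = t) ∧
    ∀ t ∈ 𝒯, ∀ t' ∈ 𝒯, t ≠ t' → (t ∩ t').card = m + 2 →
      ∃ σ : Fin (m + 2) → V, Function.Injective σ ∧
        Finset.image σ Finset.univ = t ∩ t' ∧
        IsInducedFace σ (c t) ∧ IsInducedFace σ (c t')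

/-- `X` (of dimension `d`) has no simple `d`-loops: no non-backtracking closed chain
of `d`-cells in which consecutive cells share a `(d-1)`-cell. -/
def NoSimpleLoops (d : ℕ) : Prop :=
  ∀ (n : ℕ) (τ : ℕ → Finset V), 2 ≤ n → (∀ i, τ (i + n) = τ i) →
    (∀ i, τ i ∈ X.cells ∧ (τ i).card = d + 1) →
    (∀ i, (τ i ∩ τ (i + 1)) ∈ X.cells ∧ (τ i ∩ τ (i + 1)).card = d) →
    (∀ i, τ i ≠ τ (i + 2)) → False

end SComplex

open SComplex

/-!
Since `0 ∉ spec Δ⁺`, `Δ⁺` is invertible, so `𝟙_σ = Δ⁺ g` for an `L²` form `g`. Writing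
`Δ⁺ = ∂_d ∂_d^*`, where `∂_d^* g = δ(g / deg)` is the simplicial coboundary of `g / deg`, the
`d`-form `f = ∂_d^* g` satisfies `∂_d f = 𝟙_σ`. It is `L²` by Cauchy–Schwarz: each
`(d-1)`-cell is a face of `deg σ` many `d`-cells, so `‖f‖² ≤ (d + 1) ‖g‖²`.
-/

lemma finsum_mem_const_sub {α : Type*} (s : Set α) (c : ℝ) (f : α → ℝ)
    (hc : s.Infinite → c = 0) :
    ∑ᶠ a ∈ s, (c - f a) = s.ncard * c - ∑ᶠ a ∈ s, f a := by
  by_cases hs : s.Finite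
  · rw [finsum_mem_sub_distrib _ _ hs, finsum_mem_eq_finite_toFinset_sum _ hs, Finset.sum_const,
      Set.ncard_eq_toFinset_card s hs, nsmul_eq_mul]
  · simp only [hc hs, zero_sub, mul_zero, finsum_neg_distrib]

namespace SComplex

variable {V : Type*} (X : SComplex V)

def IsAlternating {k : ℕ} (q : (Fin k → V) → ℝ) : Prop :=
  ∀ (σ : Fin k → V) (π : Equiv.Perm (Fin k)), q (σ ∘ π) = ((Equiv.Perm.sign π : ℤ) : ℝ) * q σ

def faceSum {k : ℕ} (q : (Fin k → V) → ℝ) (τ : Fin (k + 1) → V) : ℝ :=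
  ∑ j : Fin (k + 1), (-1 : ℝ) ^ (j : ℕ) * q (τ ∘ j.succAbove)

def coboundary {k : ℕ} (q : (Fin k → V) → ℝ) : (Fin (k + 1) → V) → ℝ :=
  fun τ => if X.IsCellT τ then faceSum q τ else 0

lemma sign_mul_sign_self {k : ℕ} (π : Equiv.Perm (Fin k)) :
    ((Equiv.Perm.sign π : ℤ) : ℝ) * ((Equiv.Perm.sign π : ℤ) : ℝ) = 1 := by
  rw [← Int.cast_mul, ← Units.val_mul, Int.units_mul_self, Units.val_one, Int.cast_one]

/-- Expanding a permutation of `Fin (k+1)` as (image of `0`, permutation of the rest) turns the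
full antisymmetrization of `q` into `k!` copies of the face sum. -/
lemma sum_sign_mul_comp_succ {k : ℕ} {q : (Fin k → V) → ℝ} (hq : IsAlternating q)
    (τ : Fin (k + 1) → V) :
    ∑ π : Equiv.Perm (Fin (k + 1)), ((Equiv.Perm.sign π : ℤ) : ℝ) * q (τ ∘ π ∘ Fin.succ)
      = k.factorial * faceSum q τ := by
  have term : ∀ p e, ((Equiv.Perm.sign (Equiv.Perm.decomposeFin.symm (p, e)) : ℤ) : ℝ) *
      q (τ ∘ Equiv.Perm.decomposeFin.symm (p, e) ∘ Fin.succ)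
        = (-1 : ℝ) ^ (p : ℕ) * q (τ ∘ p.succAbove) := by
    intro p e
    induction p using Fin.cases with
    | zero =>
      have hcomp : τ ∘ Equiv.Perm.decomposeFin.symm (0, e) ∘ Fin.succ
          = (τ ∘ (0 : Fin (k + 1)).succAbove) ∘ e := by
        funext x
        simp [Equiv.Perm.decomposeFin_symm_apply_succ, Fin.succAbove_zero]
      rw [hcomp, hq, Equiv.Perm.decomposeFin.symm_sign, if_pos rfl, one_mul, ← mul_assoc,
        sign_mul_sign_self]
      simp
    | succ r =>
      have hcomp : τ ∘ Equiv.Perm.decomposeFin.symm (r.succ, e) ∘ Fin.succ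
          = (τ ∘ r.succ.succAbove) ∘ (r.cycleRange * e) := by
        funext x
        simp only [Equiv.Perm.decomposeFin_symm_apply_succ, Function.comp_apply,
          Equiv.Perm.coe_mul, ← Fin.succAbove_cycleRange]
      rw [hcomp, hq, Equiv.Perm.decomposeFin.symm_sign, if_neg (Fin.succ_ne_zero r), map_mul,
        Fin.sign_cycleRange, Fin.val_succ, pow_succ]
      push_cast
      linear_combination (-((-1 : ℝ) ^ (r : ℕ) * q (τ ∘ r.succ.succAbove))) * sign_mul_sign_self e
  rw [← Equiv.sum_comp Equiv.Perm.decomposeFin.symm, Fintype.sum_prod_type, faceSum,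
    Finset.mul_sum]
  refine Finset.sum_congr rfl fun p _ => ?_
  simp only [term, Finset.sum_const, Finset.card_univ, Fintype.card_perm, Fintype.card_fin,
    nsmul_eq_mul]

lemma faceSum_comp_perm {k : ℕ} {q : (Fin k → V) → ℝ} (hq : IsAlternating q)
    (τ : Fin (k + 1) → V) (π : Equiv.Perm (Fin (k + 1))) :
    faceSum q (τ ∘ π) = ((Equiv.Perm.sign π : ℤ) : ℝ) * faceSum q τ := by
  have hfac : (k.factorial : ℝ) ≠ 0 := Nat.cast_ne_zero.mpr (Nat.factorial_ne_zero k)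
  apply mul_left_cancel₀ hfac
  calc (k.factorial : ℝ) * faceSum q (τ ∘ π)
      = ∑ ρ : Equiv.Perm (Fin (k + 1)),
          ((Equiv.Perm.sign ρ : ℤ) : ℝ) * q ((τ ∘ π) ∘ ρ ∘ Fin.succ) :=
        (sum_sign_mul_comp_succ hq (τ ∘ π)).symm
    _ = ∑ ρ : Equiv.Perm (Fin (k + 1)), ((Equiv.Perm.sign π : ℤ) : ℝ) *
          (((Equiv.Perm.sign (π * ρ) : ℤ) : ℝ) * q (τ ∘ (π * ρ) ∘ Fin.succ)) := by
        refine Finset.sum_congr rfl fun ρ _ => ?_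
        simp only [Equiv.Perm.coe_mul, map_mul, Units.val_mul, Int.cast_mul, Function.comp_assoc]
        linear_combination (-(((Equiv.Perm.sign ρ : ℤ) : ℝ) * q (τ ∘ π ∘ ρ ∘ Fin.succ))) *
          sign_mul_sign_self π
    _ = ((Equiv.Perm.sign π : ℤ) : ℝ) * ∑ ρ : Equiv.Perm (Fin (k + 1)),
          ((Equiv.Perm.sign ρ : ℤ) : ℝ) * q (τ ∘ ρ ∘ Fin.succ) := by
        rw [Finset.mul_sum]
        exact Equiv.sum_comp (Equiv.mulLeft π) fun ρ =>
          ((Equiv.Perm.sign π : ℤ) : ℝ) * (((Equiv.Perm.sign ρ : ℤ) : ℝ) * q (τ ∘ ρ ∘ Fin.succ))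
    _ = k.factorial * (((Equiv.Perm.sign π : ℤ) : ℝ) * faceSum q τ) := by
        rw [sum_sign_mul_comp_succ hq]
        ring

lemma faceSum_sq_le {k : ℕ} (q : (Fin k → V) → ℝ) (τ : Fin (k + 1) → V) :
    faceSum q τ ^ 2 ≤ (k + 1) * ∑ j : Fin (k + 1), q (τ ∘ j.succAbove) ^ 2 := by
  have h := sq_sum_le_card_mul_sum_sq (s := Finset.univ)
    (f := fun j : Fin (k + 1) => (-1 : ℝ) ^ (j : ℕ) * q (τ ∘ j.succAbove))
  simpa [faceSum, mul_pow, ← pow_mul, pow_mul'] using h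

lemma faceSum_cons {k : ℕ} (q : (Fin (k + 1) → V) → ℝ) (v : V) (ρ : Fin (k + 1) → V) :
    faceSum q (Fin.cons v ρ)
      = q ρ - ∑ i : Fin (k + 1), (-1 : ℝ) ^ (i : ℕ) * q (Fin.cons v (ρ ∘ i.succAbove)) := by
  rw [faceSum, Fin.sum_univ_succ, sub_eq_add_neg, ← Finset.sum_neg_distrib]
  congr 1
  · simp [Fin.succAbove_zero, Fin.cons_comp_succ]
  · refine Finset.sum_congr rfl fun i _ => ?_
    have hremove : Fin.removeNth i ρ = ρ ∘ i.succAbove := rfl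
    rw [Fin.cons_comp_succ_succAbove, hremove, Fin.val_succ, pow_succ]
    ring

lemma image_comp_perm {n : ℕ} (σ : Fin n → V) (π : Equiv.Perm (Fin n)) :
    Finset.image (σ ∘ π) Finset.univ = Finset.image σ Finset.univ := by
  rw [Finset.image_comp, Finset.image_univ_equiv]

lemma image_cons {n : ℕ} (v : V) (σ : Fin n → V) :
    Finset.image (Fin.cons v σ : Fin (n + 1) → V) Finset.univ
      = insert v (Finset.image σ Finset.univ) := by
  apply Finset.coe_injective
  simp [Set.image_univ]

lemma isCellT_comp_perm_iff {n : ℕ} (σ : Fin n → V) (π : Equiv.Perm (Fin n)) :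
    X.IsCellT (σ ∘ π) ↔ X.IsCellT σ := by
  rw [IsCellT, IsCellT, EquivLike.injective_comp, image_comp_perm]

lemma degT_comp_perm {n : ℕ} (σ : Fin n → V) (π : Equiv.Perm (Fin n)) :
    X.degT (σ ∘ π) = X.degT σ := by
  rw [degT, image_comp_perm, degT]

lemma IsCellT.comp_succAbove {X : SComplex V} {n : ℕ} {τ : Fin (n + 2) → V} (h : X.IsCellT τ)
    (j : Fin (n + 2)) : X.IsCellT (τ ∘ j.succAbove) := by
  refine ⟨h.1.comp Fin.succAbove_right_injective, X.down_closed h.2 ?_ ?_⟩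
  · rw [Finset.image_comp]
    exact Finset.image_subset_image (Finset.subset_univ _)
  · exact Finset.univ_nonempty.image _

lemma isCellT_cons_iff {n : ℕ} (v : V) (σ : Fin n → V) :
    X.IsCellT (Fin.cons v σ) ↔ Function.Injective σ ∧ v ∉ Finset.image σ Finset.univ ∧
      insert v (Finset.image σ Finset.univ) ∈ X.cells := by
  rw [IsCellT, Fin.cons_injective_iff, image_cons]
  simp only [Finset.mem_image, Finset.mem_univ, true_and, Set.mem_range]
  tauto

lemma insertNth_apply_comp_succAbove {n : ℕ} (j : Fin (n + 1)) (τ : Fin (n + 1) → V) :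
    Fin.insertNth j (τ j) (τ ∘ j.succAbove) = τ :=
  Fin.insertNth_self_removeNth j τ

/-- `insertNth j v σ` is `cons v σ` with its entries permuted by `j.cycleRange`. -/
lemma isCellT_insertNth_iff {n : ℕ} (j : Fin (n + 1)) (v : V) (σ : Fin n → V) :
    X.IsCellT (Fin.insertNth j v σ) ↔ X.IsCellT (Fin.cons v σ) := by
  have h : Fin.insertNth j v σ = (Fin.cons v σ : Fin (n + 1) → V) ∘ j.cycleRange := by
    refine Fin.insertNth_eq_iff.mpr ⟨by simp, funext fun k => ?_⟩
    simp [Fin.removeNth, Fin.cycleRange_succAbove]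
  rw [h, isCellT_comp_perm_iff]

lemma ncard_setOf_isCellT_cons {n : ℕ} {σ : Fin n → V} (hσ : Function.Injective σ) :
    {v | X.IsCellT (Fin.cons v σ)}.ncard = X.degT σ := by
  refine Set.BijOn.ncard_eq (f := fun v => insert v (Finset.image σ Finset.univ)) ⟨?_, ?_, ?_⟩
  · intro v hv
    obtain ⟨-, hvσ, hcell⟩ := (X.isCellT_cons_iff v σ).mp hv
    exact ⟨hcell, Finset.card_insert_of_notMem hvσ, Finset.subset_insert _ _⟩
  · intro v hv w _ hvw
    obtain ⟨-, hvσ, -⟩ := (X.isCellT_cons_iff v σ).mp hv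
    have hmem : v ∈ insert w (Finset.image σ Finset.univ) := by
      simp only at hvw
      exact hvw ▸ Finset.mem_insert_self _ _
    exact (Finset.mem_insert.mp hmem).resolve_right hvσ
  · rintro t ⟨htcell, htcard, hsub⟩
    obtain ⟨v, hvt, hvσ⟩ := Finset.exists_of_ssubset
      (Finset.ssubset_iff_subset_ne.mpr ⟨hsub, fun h => by rw [h] at htcard; omega⟩)
    have ht : insert v (Finset.image σ Finset.univ) = t :=
      Finset.eq_of_subset_of_card_le (Finset.insert_subset hvt hsub)
        (by rw [Finset.card_insert_of_notMem hvσ]; omega)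
    exact ⟨v, (X.isCellT_cons_iff v σ).mpr ⟨hσ, hvσ, ht ▸ htcell⟩, ht⟩

lemma dirac_eq_zero {n : ℕ} {σ₀ σ : Fin n → V} (h : ∀ π : Equiv.Perm (Fin n), σ ≠ σ₀ ∘ π) :
    dirac σ₀ σ = 0 := by
  rw [dirac, if_neg (fun ⟨π, _, hπ⟩ => h π hπ), if_neg (fun ⟨π, _, hπ⟩ => h π hπ)]

lemma dirac_comp_perm {n : ℕ} {σ₀ : Fin n → V} (hσ₀ : Function.Injective σ₀)
    (π : Equiv.Perm (Fin n)) : dirac σ₀ (σ₀ ∘ π) = ((Equiv.Perm.sign π : ℤ) : ℝ) := by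
  have huniq : ∀ ρ : Equiv.Perm (Fin n), σ₀ ∘ π = σ₀ ∘ ρ → π = ρ := fun ρ h =>
    Equiv.ext fun x => hσ₀ (congrFun h x)
  rcases Int.units_eq_one_or (Equiv.Perm.sign π) with hs | hs
  · rw [dirac, if_pos ⟨π, hs, rfl⟩, hs]
    norm_num
  · rw [dirac, if_neg, if_pos ⟨π, hs, rfl⟩, hs]
    · norm_num
    · rintro ⟨ρ, hρ, hπρ⟩
      rw [huniq ρ hπρ, hρ] at hs
      exact absurd hs (by decide)

lemma dirac_isForm {n : ℕ} {σ₀ : Fin n → V} (hσ₀ : X.IsCellT σ₀) : X.IsForm n (dirac σ₀) := by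
  refine ⟨fun σ hσ => dirac_eq_zero fun π hπ => hσ ?_, fun σ π => ?_⟩
  · rw [hπ, isCellT_comp_perm_iff]
    exact hσ₀
  by_cases hσ : ∃ ρ : Equiv.Perm (Fin n), σ = σ₀ ∘ ρ
  · obtain ⟨ρ, rfl⟩ := hσ
    have hcomp : (σ₀ ∘ ρ) ∘ π = σ₀ ∘ (ρ * π) := rfl
    rw [hcomp, dirac_comp_perm hσ₀.1, dirac_comp_perm hσ₀.1, map_mul, Units.val_mul, Int.cast_mul,
      mul_comm]
  · push Not at hσ
    rw [dirac_eq_zero hσ, mul_zero, dirac_eq_zero fun ρ hρ => hσ (ρ * π⁻¹) ?_]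
    funext x
    simpa using congrFun hρ (π⁻¹ x)

lemma finite_support_dirac {n : ℕ} (σ₀ : Fin n → V) : (Function.support (dirac σ₀)).Finite := by
  refine (Set.finite_range fun π : Equiv.Perm (Fin n) => σ₀ ∘ π).subset fun σ hσ => ?_
  by_contra h
  exact hσ (dirac_eq_zero fun π hπ => h ⟨π, hπ.symm⟩)

lemma IsAlternating.div_degT {n : ℕ} {g : (Fin n → V) → ℝ} (hg : IsAlternating g) :
    IsAlternating fun σ => g σ / X.degT σ := fun σ π => by
  dsimp only
  rw [hg, X.degT_comp_perm, mul_div_assoc]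

lemma coboundary_isForm {n : ℕ} {q : (Fin n → V) → ℝ} (hq : IsAlternating q) :
    X.IsForm (n + 1) (X.coboundary q) := by
  refine ⟨fun τ hτ => if_neg hτ, fun τ π => ?_⟩
  by_cases hτ : X.IsCellT τ
  · rw [coboundary, coboundary, if_pos ((X.isCellT_comp_perm_iff τ π).mpr hτ), if_pos hτ,
      faceSum_comp_perm hq]
  · rw [coboundary, coboundary, if_neg (mt (X.isCellT_comp_perm_iff τ π).mp hτ), if_neg hτ,
      mul_zero]

/-- Each `(n+1)`-cell `σ` is the `j`-th face of exactly `deg σ` tuples `τ`, so the squared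
`j`-th faces of `g / deg` sum to `Σ_σ deg σ (g σ / deg σ)² = Σ_σ g σ² / deg σ`. -/
lemma summable_sq_div_degT_comp_succAbove {n : ℕ} {g : (Fin (n + 1) → V) → ℝ}
    (hg : Summable fun σ : {σ : Fin (n + 1) → V // X.IsCellT σ} => g σ.1 ^ 2 / X.degT σ.1)
    (j : Fin (n + 2)) :
    Summable fun τ : {τ : Fin (n + 2) → V // X.IsCellT τ} =>
      (g (τ.1 ∘ j.succAbove) / X.degT (τ.1 ∘ j.succAbove)) ^ 2 := by
  let split : {τ : Fin (n + 2) → V // X.IsCellT τ} →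
      Σ σ : {σ : Fin (n + 1) → V // X.IsCellT σ}, {v | X.IsCellT (Fin.cons v σ.1)} := fun τ =>
    ⟨⟨τ.1 ∘ j.succAbove, τ.2.comp_succAbove j⟩,
      ⟨τ.1 j, (X.isCellT_insertNth_iff j (τ.1 j) (τ.1 ∘ j.succAbove)).mp
        ((insertNth_apply_comp_succAbove j τ.1).symm ▸ τ.2)⟩⟩
  have hsplit : Function.Injective split := by
    intro a b hab
    have hface : a.1 ∘ j.succAbove = b.1 ∘ j.succAbove := congrArg (fun x => x.1.1) hab
    have hvertex : a.1 j = b.1 j := congrArg (fun x => x.2.1) hab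
    apply Subtype.ext
    rw [← insertNth_apply_comp_succAbove j a.1, ← insertNth_apply_comp_succAbove j b.1, hface,
      hvertex]
  have hsigma : Summable fun x : Σ σ : {σ : Fin (n + 1) → V // X.IsCellT σ},
      {v | X.IsCellT (Fin.cons v σ.1)} => (g x.1.1 / X.degT x.1.1) ^ 2 := by
    rw [summable_sigma_of_nonneg fun _ => sq_nonneg _]
    refine ⟨fun σ => ?_, hg.congr fun σ => ?_⟩
    · by_cases hfin : {v | X.IsCellT (Fin.cons v σ.1)}.Finite
      · have := hfin.to_subtype
        exact Summable.of_finite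
      · have hdeg : X.degT σ.1 = 0 := by
          rw [← X.ncard_setOf_isCellT_cons σ.2.1, Set.Infinite.ncard hfin]
        simp [hdeg]
    · dsimp only
      rw [tsum_const, Nat.card_coe_set_eq, X.ncard_setOf_isCellT_cons σ.2.1, nsmul_eq_mul]
      rcases eq_or_ne (X.degT σ.1 : ℝ) 0 with hdeg | hdeg
      · simp [hdeg]
      · field_simp
  exact (hsigma.comp_injective hsplit :)

lemma summable_coboundary_sq {n : ℕ} {q : (Fin (n + 1) → V) → ℝ}
    (hq : ∀ j : Fin (n + 2),
      Summable fun τ : {τ : Fin (n + 2) → V // X.IsCellT τ} => q (τ.1 ∘ j.succAbove) ^ 2) :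
    Summable fun τ : {τ : Fin (n + 2) → V // X.IsCellT τ} => X.coboundary q τ.1 ^ 2 := by
  refine Summable.of_nonneg_of_le (fun _ => sq_nonneg _) (fun τ => ?_)
    ((summable_sum (s := Finset.univ) fun j _ => hq j).mul_left ((n : ℝ) + 2))
  rw [coboundary, if_pos τ.2]
  have h := faceSum_sq_le q τ.1
  push_cast at h
  linarith

/-- `∂_d ∂_d^* = Δ⁺`, where `∂_d^* g = δ(g / deg)` is the adjoint of the boundary map. -/
lemma bdry_coboundary_div_degT {n : ℕ} {g : (Fin (n + 1) → V) → ℝ}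
    (hcell : ∀ σ, ¬ X.IsCellT σ → g σ = 0) (hdeg : ∀ σ, X.degT σ = 0 → g σ = 0) :
    X.bdry (X.coboundary fun σ => g σ / X.degT σ) = X.lapUp g := by
  funext ρ
  set S := {v | X.IsCellT (Fin.cons v ρ)}
  have hcard : (S.ncard : ℝ) * (g ρ / X.degT ρ) = g ρ := by
    by_cases hρ : Function.Injective ρ
    · rw [X.ncard_setOf_isCellT_cons hρ]
      by_cases h0 : X.degT ρ = 0
      · simp [h0, hdeg ρ h0]
      · field_simp
    · simp [hcell ρ fun h => hρ h.1]
  have hS : S.Infinite → g ρ / X.degT ρ = 0 := fun hinf => by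
    rw [← hcard, hinf.ncard]
    simp
  calc X.bdry (X.coboundary fun σ => g σ / X.degT σ) ρ
      = ∑ᶠ v ∈ S, (g ρ / X.degT ρ - ∑ i : Fin (n + 1), (-1 : ℝ) ^ (i : ℕ) *
          (g (Fin.cons v (ρ ∘ i.succAbove)) / X.degT (Fin.cons v (ρ ∘ i.succAbove)))) :=
        finsum_mem_congr rfl fun v hv => by
          rw [coboundary, if_pos (show X.IsCellT _ from hv), faceSum_cons]
    _ = X.lapUp g ρ := by
        rw [finsum_mem_const_sub _ _ _ hS, hcard]
        simp only [lapUp, nbrW, mul_div_assoc]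
        rfl

variable {n : ℕ} {H : Type*} [NormedAddCommGroup H] [InnerProductSpace ℝ H]

/-- Cells of degree `0` (including those of infinite degree, where `degT` has the junk value
`0`) carry weight `0` in the inner product, so truncating `T h` to cells of positive degree
gives a form representing the same vector. -/
lemma apply_eq_zero_of_degT_eq_zero (T : H →ₗ[ℝ] ((Fin n → V) → ℝ))
    (hTform : ∀ h, X.IsForm n (T h))
    (hTinner : ∀ h₁ h₂ : H,
      HasSum (fun σ : {σ : Fin n → V // X.IsCellT σ} =>
          T h₁ σ.1 * T h₂ σ.1 / ((X.degT σ.1 : ℝ) * (n.factorial : ℝ)))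
        (inner ℝ h₁ h₂ : ℝ))
    (hTsurj : ∀ f : (Fin n → V) → ℝ, X.IsForm n f →
      Summable (fun σ : {σ : Fin n → V // X.IsCellT σ} =>
        f σ.1 ^ 2 / ((X.degT σ.1 : ℝ) * (n.factorial : ℝ))) →
      ∃ h, T h = f)
    (h : H) {σ : Fin n → V} (hσ : X.degT σ = 0) : T h σ = 0 := by
  set f : (Fin n → V) → ℝ := fun σ => if X.degT σ = 0 then 0 else T h σ with hf
  have hform : X.IsForm n f := by
    refine ⟨fun σ hσ => ?_, fun σ π => ?_⟩
    · simp [hf, (hTform h).1 σ hσ]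
    · by_cases h0 : X.degT σ = 0 <;> simp [hf, X.degT_comp_perm, h0, (hTform h).2 σ π]
  have hweight : ∀ σ : Fin n → V, X.degT σ = 0 → ∀ a : ℝ,
      a / ((X.degT σ : ℝ) * (n.factorial : ℝ)) = 0 := fun σ h0 a => by simp [h0]
  obtain ⟨h', hh'⟩ := hTsurj f hform <| (hTinner h h).summable.congr fun σ => by
    by_cases h0 : X.degT σ.1 = 0
    · rw [hweight _ h0, hweight _ h0]
    · simp [hf, h0, sq]
  have hdiff : ∀ σ, T (h - h') σ = if X.degT σ = 0 then T h σ else 0 := fun σ => by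
    by_cases h0 : X.degT σ = 0 <;> simp [hh', hf, h0]
  have hzero : inner ℝ (h - h') (h - h') = (0 : ℝ) :=
    (hTinner (h - h') (h - h')).unique <| by
      convert hasSum_zero with σ
      by_cases h0 : X.degT σ.1 = 0
      · exact hweight _ h0 _
      · simp [hdiff, h0]
  rw [sub_eq_zero.mp (inner_self_eq_zero.mp hzero), hh']
  exact if_pos hσ

end SComplex

theorem stmt17_general {V : Type*} (m : ℕ) (X : SComplex V)
    (H : Type*) [NormedAddCommGroup H] [InnerProductSpace ℝ H]
    (T : H →ₗ[ℝ] ((Fin (m + 2) → V) → ℝ))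
    (hTform : ∀ h, X.IsForm (m + 2) (T h))
    (hTinner : ∀ h₁ h₂ : H,
      HasSum (fun σ : {σ : Fin (m + 2) → V // X.IsCellT σ} =>
          T h₁ σ.1 * T h₂ σ.1 / ((X.degT σ.1 : ℝ) * ((m + 2).factorial : ℝ)))
        (inner ℝ h₁ h₂ : ℝ))
    (hTsurj : ∀ f : (Fin (m + 2) → V) → ℝ, X.IsForm (m + 2) f →
      Summable (fun σ : {σ : Fin (m + 2) → V // X.IsCellT σ} =>
        f σ.1 ^ 2 / ((X.degT σ.1 : ℝ) * ((m + 2).factorial : ℝ))) →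
      ∃ h, T h = f)
    (Δp : H →L[ℝ] H)
    (hΔ : ∀ (h : H) (σ : Fin (m + 2) → V), T (Δp h) σ = T h σ - X.nbrW (T h) σ)
    (hspec : (0 : ℝ) ∉ spectrum ℝ Δp) :
    ∀ σ₀ : Fin (m + 2) → V, X.IsCellT σ₀ →
      ∃ f : (Fin (m + 3) → V) → ℝ, X.IsForm (m + 3) f ∧
        Summable (fun τ : {τ : Fin (m + 3) → V // X.IsCellT τ} =>
          f τ.1 ^ 2 / ((m + 3).factorial : ℝ)) ∧
        ∀ ρ : Fin (m + 2) → V, X.bdry f ρ = dirac σ₀ ρ := by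
  intro σ₀ hσ₀
  obtain ⟨h₀, hh₀⟩ := hTsurj _ (X.dirac_isForm hσ₀) <| summable_of_hasFiniteSupport <|
    ((finite_support_dirac σ₀).preimage Subtype.val_injective.injOn).subset
      fun σ hσ hzero => hσ (by simp [hzero])
  obtain ⟨R, hR⟩ := ((spectrum.zero_notMem_iff ℝ).mp hspec).exists_right_inv
  set g := T (R h₀)
  have hΔg : Δp (R h₀) = h₀ := by simpa using DFunLike.congr_fun hR h₀
  have hlap : X.lapUp g = dirac σ₀ := funext fun σ => by rw [lapUp, ← hΔ, hΔg, hh₀]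
  have hfact : ((m + 2).factorial : ℝ) ≠ 0 := Nat.cast_ne_zero.mpr (Nat.factorial_ne_zero _)
  have hg : Summable fun σ : {σ : Fin (m + 2) → V // X.IsCellT σ} => g σ.1 ^ 2 / X.degT σ.1 :=
    ((hTinner (R h₀) (R h₀)).summable.mul_right ((m + 2).factorial : ℝ)).congr fun σ => by
      rw [← div_div, div_mul_cancel₀ _ hfact, sq]
  refine ⟨X.coboundary fun σ => g σ / X.degT σ,
    X.coboundary_isForm (IsAlternating.div_degT X (hTform (R h₀)).2),
    (X.summable_coboundary_sq (q := fun σ => g σ / X.degT σ)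
      (X.summable_sq_div_degT_comp_succAbove hg)).div_const _,
    fun ρ => ?_⟩
  rw [X.bdry_coboundary_div_degT (hTform (R h₀)).1
    fun σ => X.apply_eq_zero_of_degT_eq_zero T hTform hTinner hTsurj _, hlap]

/-- Let `X` be a uniform `d`-complex (`d = m+2 ≥ 2`) on a countable
vertex set with `(d-1)`-degrees bounded by `K`, and let `Δ⁺` be the upper Laplacian on
the Hilbert space of `L²` `(d-1)`-forms (realized by `(H, T)`). If `0` is not in the
spectrum of `Δ⁺`, then for every oriented `(d-1)`-cell `σ₀` there is an `L²` `d`-form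
`f` with `∂_d f = 𝟙_{σ₀}`. -/
theorem stmt17 {V : Type*} [Countable V] (m : ℕ) (X : SComplex V)
    (hdim : ∀ s ∈ X.cells, s.card ≤ m + 3)
    (huni : ∀ s ∈ X.cells, ∃ t ∈ X.cells, t.card = m + 3 ∧ s ⊆ t)
    (htop : ∃ s ∈ X.cells, s.card = m + 3)
    (K : ℕ) (hdeg : ∀ s ∈ X.cells, s.card = m + 2 → X.degS s ≤ K)
    (H : Type*) [NormedAddCommGroup H] [InnerProductSpace ℝ H] [CompleteSpace H]
    (T : H →ₗ[ℝ] ((Fin (m + 2) → V) → ℝ)) (hTinj : Function.Injective T)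
    (hTform : ∀ h, X.IsForm (m + 2) (T h))
    (hTinner : ∀ h₁ h₂ : H,
      HasSum (fun σ : {σ : Fin (m + 2) → V // X.IsCellT σ} =>
          T h₁ σ.1 * T h₂ σ.1 / ((X.degT σ.1 : ℝ) * ((m + 2).factorial : ℝ)))
        (inner ℝ h₁ h₂ : ℝ))
    (hTsurj : ∀ f : (Fin (m + 2) → V) → ℝ, X.IsForm (m + 2) f →
      Summable (fun σ : {σ : Fin (m + 2) → V // X.IsCellT σ} =>
        f σ.1 ^ 2 / ((X.degT σ.1 : ℝ) * ((m + 2).factorial : ℝ))) →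
      ∃ h, T h = f)
    (Δp : H →L[ℝ] H)
    (hΔ : ∀ (h : H) (σ : Fin (m + 2) → V), T (Δp h) σ = T h σ - X.nbrW (T h) σ)
    (hspec : (0 : ℝ) ∉ spectrum ℝ Δp) :
    ∀ σ₀ : Fin (m + 2) → V, X.IsCellT σ₀ →
      ∃ f : (Fin (m + 3) → V) → ℝ, X.IsForm (m + 3) f ∧
        Summable (fun τ : {τ : Fin (m + 3) → V // X.IsCellT τ} =>
          f τ.1 ^ 2 / ((m + 3).factorial : ℝ)) ∧
        ∀ ρ : Fin (m + 2) → V, X.bdry f ρ = dirac σ₀ ρ :=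
  stmt17_general m X H T hTform hTinner hTsurj Δp hΔ hspec
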